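/- Let ε ∈ (0,1], let k ≥ 1 be an integer, and let Q be the output of the Frequent Directions algorithm run on an n×d matrix A with parameter ℓ = ⌈k + k/ε⌉. Then ‖A − π_{Q_k}(A)‖_F² ≤ (1+ε) ‖A − A_k‖_F². -/

import Mathlib

/-!
One Frequent Directions step adds `aᵢ aᵢᵀ` to the Gram matrix and removes `δᵢ Yᵢ Yᵢᵀ`, so the
output satisfies `QᵀQ = AᵀA - ∑ᵢ δᵢ Yᵢ Yᵢᵀ` with `YᵢᵀYᵢ = 1`. Hence, with `Δ = ∑ᵢ δᵢ`,
`‖Qx‖² ≤ ‖Ax‖² ≤ ‖Qx‖² + Δ‖x‖²` for every `x`, and taking traces `‖Q‖_F² = ‖A‖_F² - ℓΔ`.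

Comparing the trace identity with Bessel's inequality for the directions `v₁, …, v_k` gives
`(ℓ - k)Δ ≤ ‖A - A_k‖_F²`. On the other hand
`‖A - π_{Q_k}(A)‖_F² = ‖A‖_F² - ∑_{i<k} ‖A yᵢ‖²` and
`∑ ‖A yᵢ‖² ≥ ∑ ‖Q yᵢ‖² = ∑ τᵢ² ≥ ∑ ‖Q vᵢ‖² ≥ ∑ ‖A vᵢ‖² - kΔ`, the middle step being Ky Fan's
maximum principle. So the projection error exceeds `‖A - A_k‖_F²` by at most
`kΔ ≤ ε (ℓ - k) Δ ≤ ε ‖A - A_k‖_F²`.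
-/

open Matrix

/-- The squared Euclidean norm of a vector in `ℝ^m`. -/
noncomputable def sqNorm {m : ℕ} (v : Fin m → ℝ) : ℝ := ∑ i, v i ^ 2

/-- The squared Frobenius norm of a real matrix. -/
noncomputable def frobSq {m p : ℕ} (M : Matrix (Fin m) (Fin p) ℝ) : ℝ :=
  ∑ i, ∑ j, M i j ^ 2

lemma sqNorm_eq_dotProduct {m : ℕ} (v : Fin m → ℝ) : sqNorm v = v ⬝ᵥ v := by
  simp only [sqNorm, dotProduct, sq]

lemma sqNorm_mulVec {m d : ℕ} (M : Matrix (Fin m) (Fin d) ℝ) (x : Fin d → ℝ) :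
    sqNorm (M *ᵥ x) = x ⬝ᵥ (Mᵀ * M) *ᵥ x := by
  rw [sqNorm_eq_dotProduct, ← mulVec_mulVec, dotProduct_mulVec x, vecMul_transpose]

lemma frobSq_eq_sum_sqNorm {m d : ℕ} (M : Matrix (Fin m) (Fin d) ℝ) :
    frobSq M = ∑ r, sqNorm (M r) :=
  rfl

lemma frobSq_eq_trace {m d : ℕ} (M : Matrix (Fin m) (Fin d) ℝ) :
    frobSq M = trace (Mᵀ * M) := by
  simp only [frobSq, trace, diag, mul_apply, transpose_apply, sq]
  exact Finset.sum_comm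

lemma sum_sqNorm_mulVec_eq_sum_sq {m d : ℕ} {ι : Type*} (S : Finset ι)
    (M : Matrix (Fin m) (Fin d) ℝ) (v : ι → Fin d → ℝ) :
    ∑ i ∈ S, sqNorm (M *ᵥ v i) = ∑ r, ∑ i ∈ S, (M r ⬝ᵥ v i) ^ 2 :=
  Finset.sum_comm

section Orthonormal

variable {d : ℕ} {ι : Type*} [DecidableEq ι] (S : Finset ι) {W : ι → Fin d → ℝ}

lemma sqNorm_sub_sum_smul
    (hW : ∀ a ∈ S, ∀ b ∈ S, W a ⬝ᵥ W b = if a = b then 1 else 0) (r : Fin d → ℝ) :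
    sqNorm (r - ∑ a ∈ S, (r ⬝ᵥ W a) • W a) = sqNorm r - ∑ a ∈ S, (r ⬝ᵥ W a) ^ 2 := by
  set p := ∑ a ∈ S, (r ⬝ᵥ W a) • W a
  have hpW : ∀ b ∈ S, p ⬝ᵥ W b = r ⬝ᵥ W b := by
    intro b hb
    simp only [p, sum_dotProduct, smul_dotProduct, smul_eq_mul]
    rw [Finset.sum_eq_single_of_mem b hb fun a ha hab => by simp [hW a ha b hb, hab]]
    simp [hW b hb b hb]
  have hrp : r ⬝ᵥ p = ∑ a ∈ S, (r ⬝ᵥ W a) ^ 2 := by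
    simp only [p, dotProduct_sum, dotProduct_smul, smul_eq_mul, sq]
  have hpp : p ⬝ᵥ p = ∑ a ∈ S, (r ⬝ᵥ W a) ^ 2 := by
    conv_lhs => rw [show p = ∑ a ∈ S, (r ⬝ᵥ W a) • W a from rfl]
    simp only [dotProduct_sum, dotProduct_smul, smul_eq_mul, sq]
    exact Finset.sum_congr rfl fun a ha => by rw [hpW a ha]
  rw [sqNorm_eq_dotProduct, sqNorm_eq_dotProduct, sub_dotProduct, dotProduct_sub, dotProduct_sub,
    dotProduct_comm p r, hrp, hpp]
  ring

lemma sum_sq_dotProduct_le_sqNorm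
    (hW : ∀ a ∈ S, ∀ b ∈ S, W a ⬝ᵥ W b = if a = b then 1 else 0) (r : Fin d → ℝ) :
    ∑ a ∈ S, (r ⬝ᵥ W a) ^ 2 ≤ sqNorm r := by
  have := sqNorm_sub_sum_smul S hW r
  have : 0 ≤ sqNorm (r - ∑ a ∈ S, (r ⬝ᵥ W a) • W a) := Finset.sum_nonneg fun _ _ => sq_nonneg _
  linarith

lemma sqNorm_mulVec_le_of_mul_transpose_eq_one {m d : ℕ} {B : Matrix (Fin m) (Fin d) ℝ}
    (hB : B * Bᵀ = 1) (x : Fin d → ℝ) :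
    sqNorm (B *ᵥ x) ≤ sqNorm x := by
  have hW : ∀ a ∈ Finset.univ, ∀ b ∈ Finset.univ, B a ⬝ᵥ B b = if a = b then 1 else 0 :=
    fun a _ b _ => congrFun (congrFun hB a) b
  have := sum_sq_dotProduct_le_sqNorm Finset.univ hW x
  simp only [dotProduct_comm x] at this
  exact this

lemma frobSq_sub_proj {n : ℕ}
    (hW : ∀ a ∈ S, ∀ b ∈ S, W a ⬝ᵥ W b = if a = b then 1 else 0) (A : Matrix (Fin n) (Fin d) ℝ) :
    frobSq (A - of fun r t => ∑ a ∈ S, (A r ⬝ᵥ W a) * W a t) =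
      frobSq A - ∑ a ∈ S, sqNorm (A *ᵥ W a) := by
  have hrow : ∀ r, (A - of fun r t => ∑ a ∈ S, (A r ⬝ᵥ W a) * W a t) r =
      A r - ∑ a ∈ S, (A r ⬝ᵥ W a) • W a := by
    intro r; ext t; simp [Finset.sum_apply]
  simp only [frobSq_eq_sum_sqNorm, hrow, sqNorm_sub_sum_smul S hW, Finset.sum_sub_distrib,
    sum_sqNorm_mulVec_eq_sum_sq]

lemma sum_sqNorm_mulVec_le_frobSq {m : ℕ}
    (hW : ∀ a ∈ S, ∀ b ∈ S, W a ⬝ᵥ W b = if a = b then 1 else 0) (M : Matrix (Fin m) (Fin d) ℝ) :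
    ∑ a ∈ S, sqNorm (M *ᵥ W a) ≤ frobSq M := by
  rw [sum_sqNorm_mulVec_eq_sum_sq]
  exact Finset.sum_le_sum fun r _ => sum_sq_dotProduct_le_sqNorm S hW (M r)

end Orthonormal

section Spectral

variable {d : ℕ} {y : Fin d → Fin d → ℝ}

lemma dotProduct_mulVec_eq_sum_eigenvalues
    (hy : ∀ a b, y a ⬝ᵥ y b = if a = b then 1 else 0) {M : Matrix (Fin d) (Fin d) ℝ}
    {μ : Fin d → ℝ} (hM : ∀ a, M *ᵥ y a = μ a • y a) (x : Fin d → ℝ) :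
    x ⬝ᵥ M *ᵥ x = ∑ a, μ a * (y a ⬝ᵥ x) ^ 2 := by
  set W : Matrix (Fin d) (Fin d) ℝ := of y
  have hWWt : W * Wᵀ = 1 := by
    ext a b
    exact hy a b
  have hMW : M * Wᵀ = Wᵀ * diagonal μ := by
    ext t a
    rw [mul_diagonal]
    change (M *ᵥ y a) t = y a t * μ a
    rw [hM a, Pi.smul_apply, smul_eq_mul, mul_comm]
  -- `W` is square, so its orthonormal rows force `Wᵀ * W = 1` as well
  have hM' : M = Wᵀ * diagonal μ * W := by
    rw [← hMW, Matrix.mul_assoc, mul_eq_one_comm.mp hWWt, Matrix.mul_one]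
  rw [hM', ← mulVec_mulVec, ← mulVec_mulVec, dotProduct_mulVec x, vecMul_transpose]
  refine Finset.sum_congr rfl fun a _ => ?_
  rw [mulVec_diagonal]
  change (y a ⬝ᵥ x) * (μ a * (y a ⬝ᵥ x)) = _
  ring

lemma sum_sq_dotProduct_eq_sqNorm (hy : ∀ a b, y a ⬝ᵥ y b = if a = b then 1 else 0)
    (x : Fin d → ℝ) :
    ∑ a, (y a ⬝ᵥ x) ^ 2 = sqNorm x := by
  simpa [sqNorm_eq_dotProduct] using
    (dotProduct_mulVec_eq_sum_eigenvalues hy (M := 1) (μ := 1) (by simp) x).symm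

end Spectral

lemma sum_mul_le_sum_of_threshold {ι : Type*} [Fintype ι] [DecidableEq ι] (S : Finset ι)
    {u t : ι → ℝ} (c : ℝ) (hS : ∀ a ∈ S, c ≤ u a) (hSc : ∀ a ∉ S, u a ≤ c)
    (ht0 : ∀ a, 0 ≤ t a) (ht1 : ∀ a, t a ≤ 1) (hsum : ∑ a, t a = S.card) :
    ∑ a, u a * t a ≤ ∑ a ∈ S, u a := by
  have hterm : ∀ a,
      u a * t a - (if a ∈ S then u a else 0) ≤ c * t a - (if a ∈ S then c else 0) := by
    intro a
    split_ifs with ha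
    · nlinarith [hS a ha, ht1 a]
    · nlinarith [hSc a ha, ht0 a]
  have := Finset.sum_le_sum fun a (_ : a ∈ Finset.univ) => hterm a
  simp only [Finset.sum_sub_distrib, Finset.sum_ite_mem, Finset.univ_inter, ← Finset.mul_sum,
    hsum, Finset.sum_const, nsmul_eq_mul] at this
  linarith

lemma sum_dotProduct_mulVec_le_sum_eigenvalues {d : ℕ} {y : Fin d → Fin d → ℝ}
    (hy : ∀ a b, y a ⬝ᵥ y b = if a = b then 1 else 0) {M : Matrix (Fin d) (Fin d) ℝ}
    {μ : Fin d → ℝ} (hμ : Antitone μ) (hμ0 : ∀ a, 0 ≤ μ a) (hM : ∀ a, M *ᵥ y a = μ a • y a)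
    {v : Fin d → Fin d → ℝ} (hv : ∀ a b, v a ⬝ᵥ v b = if a = b then 1 else 0) (k : ℕ) :
    ∑ i ∈ Finset.univ.filter (fun i : Fin d => (i : ℕ) < k), v i ⬝ᵥ M *ᵥ v i ≤
      ∑ i ∈ Finset.univ.filter (fun i : Fin d => (i : ℕ) < k), μ i := by
  set S := Finset.univ.filter (fun i : Fin d => (i : ℕ) < k)
  set t : Fin d → ℝ := fun a => ∑ i ∈ S, (y a ⬝ᵥ v i) ^ 2
  have hexpand : ∑ i ∈ S, v i ⬝ᵥ M *ᵥ v i = ∑ a, μ a * t a := by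
    simp only [dotProduct_mulVec_eq_sum_eigenvalues hy hM, t, Finset.mul_sum]
    exact Finset.sum_comm
  have ht1 : ∀ a, t a ≤ 1 := fun a => by
    simpa [sqNorm_eq_dotProduct, hy] using
      sum_sq_dotProduct_le_sqNorm S (fun i _ j _ => hv i j) (y a)
  have hsum : ∑ a, t a = S.card := by
    rw [Finset.sum_comm]
    simp [sum_sq_dotProduct_eq_sqNorm hy, sqNorm_eq_dotProduct, hv]
  rw [hexpand]
  -- `μ k` separates the top `k` eigenvalues from the others; for `k ≥ d` every index lies in `S`
  refine sum_mul_le_sum_of_threshold S (if h : k < d then μ ⟨k, h⟩ else 0) ?_ ?_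
    (fun a => Finset.sum_nonneg fun _ _ => sq_nonneg _) ht1 hsum
  · intro a ha
    split_ifs with h
    · exact hμ (Fin.mk_le_mk.mpr (Finset.mem_filter.mp ha).2.le)
    · exact hμ0 a
  · intro a ha
    have hka : k ≤ a := by simpa [S] using ha
    rw [dif_pos (hka.trans_lt a.isLt)]
    exact hμ (Fin.mk_le_mk.mpr hka)

lemma Fin.sum_succ_sub_castSucc {M : Type*} [AddCommGroup M] {n : ℕ} (f : Fin (n + 1) → M) :
    ∑ i : Fin n, (f i.succ - f i.castSucc) = f (Fin.last n) - f 0 := by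
  induction n with
  | zero => simp
  | succ n ih =>
    rw [Fin.sum_univ_castSucc]
    simp only [Fin.succ_castSucc]
    rw [ih fun i => f i.castSucc, Fin.succ_last, Fin.castSucc_zero]
    abel

lemma transpose_mul_self_updateRow {m n R : Type*} [Fintype m] [DecidableEq m] [Semiring R]
    (M : Matrix m n R) {r : m} (hr : M r = 0) (a : n → R) :
    (M.updateRow r a)ᵀ * M.updateRow r a = Mᵀ * M + vecMulVec a a := by
  ext t t'
  simp only [mul_apply, transpose_apply, Matrix.add_apply, vecMulVec_apply]
  rw [Fintype.sum_eq_add_sum_compl r, Fintype.sum_eq_add_sum_compl r fun q => M q t * M q t',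
    updateRow_self, hr, Pi.zero_apply, zero_mul, zero_add, add_comm]
  congr 1
  refine Finset.sum_congr rfl fun q hq => ?_
  rw [updateRow_ne (Finset.mem_compl.mp hq ∘ Finset.mem_singleton.mpr)]

lemma transpose_mul_self_eq_sum_vecMulVec {m n R : Type*} [Fintype m] [CommSemiring R]
    (M : Matrix m n R) :
    Mᵀ * M = ∑ i, vecMulVec (M i) (M i) := by
  ext t t'
  simp [mul_apply, Matrix.sum_apply, vecMulVec_apply]

lemma transpose_mul_self_svd_shrink {m n p : Type*} [Fintype m] [Fintype n] [Fintype p]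
    [DecidableEq p] {C : Matrix m n ℝ} {Z : Matrix m p ℝ} {Y : Matrix n p ℝ} {s : p → ℝ}
    {δ : ℝ} (hZ : Zᵀ * Z = 1) (hSVD : C = Z * diagonal s * Yᵀ) (hδ : ∀ j, δ ≤ s j ^ 2) :
    (diagonal (fun j => √(s j ^ 2 - δ)) * Yᵀ)ᵀ * (diagonal (fun j => √(s j ^ 2 - δ)) * Yᵀ) =
      Cᵀ * C - δ • (Y * Yᵀ) := by
  have hC : Cᵀ * C = Y * diagonal (fun j => s j ^ 2) * Yᵀ := by
    rw [hSVD]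
    simp only [transpose_mul, transpose_transpose, diagonal_transpose, Matrix.mul_assoc]
    rw [← Matrix.mul_assoc Zᵀ, hZ, Matrix.one_mul, ← Matrix.mul_assoc (diagonal s),
      diagonal_mul_diagonal]
    simp only [sq]
  have hshrink : diagonal (fun j => √(s j ^ 2 - δ)) * diagonal (fun j => √(s j ^ 2 - δ)) =
      diagonal (fun j => s j ^ 2) - δ • 1 := by
    ext j j'
    by_cases h : j = j' <;> simp [h, Real.mul_self_sqrt (sub_nonneg.mpr (hδ j'))]
  rw [hC, transpose_mul, diagonal_transpose, transpose_transpose, Matrix.mul_assoc,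
    ← Matrix.mul_assoc (diagonal _), hshrink]
  simp only [Matrix.mul_sub, Matrix.sub_mul, Matrix.mul_smul, Matrix.smul_mul, Matrix.one_mul,
    Matrix.mul_assoc]

lemma gram_frequentDirections {n d ℓ : ℕ} (r : Fin ℓ) (A : Matrix (Fin n) (Fin d) ℝ)
    {Q : Fin (n + 1) → Matrix (Fin ℓ) (Fin d) ℝ} {C : Fin n → Matrix (Fin ℓ) (Fin d) ℝ}
    {Z : Fin n → Matrix (Fin ℓ) (Fin ℓ) ℝ} {Y : Fin n → Matrix (Fin d) (Fin ℓ) ℝ}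
    {s : Fin n → Fin ℓ → ℝ} {δ : Fin n → ℝ} (hQ0 : Q 0 = 0)
    (hC : ∀ i, C i = (Q i.castSucc).updateRow r (A i)) (hZ : ∀ i, (Z i)ᵀ * Z i = 1)
    (hSVD : ∀ i, C i = Z i * diagonal (s i) * (Y i)ᵀ) (hmin : ∀ i j, δ i ≤ s i j ^ 2)
    (hδ : ∀ i, δ i = s i r ^ 2)
    (hQs : ∀ i, Q i.succ = diagonal (fun j => √(s i j ^ 2 - δ i)) * (Y i)ᵀ) :
    (Q (Fin.last n))ᵀ * Q (Fin.last n) = Aᵀ * A - ∑ i, δ i • (Y i * (Y i)ᵀ) := by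
  have hrow : ∀ j, Q j r = 0 := Fin.cases (by rw [hQ0]; rfl) fun i => by
    ext t
    simp [hQs i, diagonal_mul, hδ i]
  have hstep : ∀ i, (Q i.succ)ᵀ * Q i.succ - (Q i.castSucc)ᵀ * Q i.castSucc =
      vecMulVec (A i) (A i) - δ i • (Y i * (Y i)ᵀ) := fun i => by
    rw [hQs i, transpose_mul_self_svd_shrink (hZ i) (hSVD i) (hmin i), hC i,
      transpose_mul_self_updateRow _ (hrow _)]
    abel
  have := Fin.sum_succ_sub_castSucc fun j => (Q j)ᵀ * Q j
  simp only [hstep, Finset.sum_sub_distrib, hQ0, transpose_zero, Matrix.zero_mul, sub_zero] at this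
  rw [← this, transpose_mul_self_eq_sum_vecMulVec]

section Gram

variable {n d ℓ m : ℕ} {A : Matrix (Fin n) (Fin d) ℝ} {Q : Matrix (Fin ℓ) (Fin d) ℝ}
  {Y : Fin m → Matrix (Fin d) (Fin ℓ) ℝ} {δ : Fin m → ℝ}

lemma sqNorm_mulVec_of_gram (hG : Qᵀ * Q = Aᵀ * A - ∑ i, δ i • (Y i * (Y i)ᵀ))
    (x : Fin d → ℝ) :
    sqNorm (Q *ᵥ x) = sqNorm (A *ᵥ x) - ∑ i, δ i * sqNorm ((Y i)ᵀ *ᵥ x) := by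
  simp only [sqNorm_mulVec, hG, transpose_transpose, sub_mulVec, sum_mulVec, smul_mulVec,
    dotProduct_sub, dotProduct_sum, dotProduct_smul, smul_eq_mul]

lemma frobSq_of_gram (hG : Qᵀ * Q = Aᵀ * A - ∑ i, δ i • (Y i * (Y i)ᵀ))
    (hY : ∀ i, (Y i)ᵀ * Y i = 1) :
    frobSq Q = frobSq A - ℓ * ∑ i, δ i := by
  simp only [frobSq_eq_trace, hG, trace_sub, trace_sum, trace_smul, trace_mul_comm (Y _), hY,
    trace_one, Fintype.card_fin, smul_eq_mul]
  rw [← Finset.sum_mul, mul_comm]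

lemma sqNorm_mulVec_le_of_gram (hG : Qᵀ * Q = Aᵀ * A - ∑ i, δ i • (Y i * (Y i)ᵀ))
    (hδ : ∀ i, 0 ≤ δ i) (x : Fin d → ℝ) :
    sqNorm (Q *ᵥ x) ≤ sqNorm (A *ᵥ x) := by
  rw [sqNorm_mulVec_of_gram hG]
  have : 0 ≤ ∑ i, δ i * sqNorm ((Y i)ᵀ *ᵥ x) :=
    Finset.sum_nonneg fun i _ => mul_nonneg (hδ i) (Finset.sum_nonneg fun _ _ => sq_nonneg _)
  linarith

lemma sqNorm_mulVec_le_add_of_gram (hG : Qᵀ * Q = Aᵀ * A - ∑ i, δ i • (Y i * (Y i)ᵀ))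
    (hδ : ∀ i, 0 ≤ δ i) (hY : ∀ i, (Y i)ᵀ * Y i = 1) (x : Fin d → ℝ) :
    sqNorm (A *ᵥ x) ≤ sqNorm (Q *ᵥ x) + (∑ i, δ i) * sqNorm x := by
  rw [sqNorm_mulVec_of_gram hG, Finset.sum_mul]
  have : ∑ i, δ i * sqNorm ((Y i)ᵀ *ᵥ x) ≤ ∑ i, δ i * sqNorm x := Finset.sum_le_sum fun i _ =>
    mul_le_mul_of_nonneg_left
      (sqNorm_mulVec_le_of_mul_transpose_eq_one (by rw [transpose_transpose, hY i]) x) (hδ i)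
  linarith

lemma sum_sqNorm_mulVec_le_add_of_gram {ι : Type*} (S : Finset ι) {v : ι → Fin d → ℝ}
    (hv : ∀ i ∈ S, sqNorm (v i) = 1) (hG : Qᵀ * Q = Aᵀ * A - ∑ i, δ i • (Y i * (Y i)ᵀ))
    (hδ : ∀ i, 0 ≤ δ i) (hY : ∀ i, (Y i)ᵀ * Y i = 1) :
    ∑ i ∈ S, sqNorm (A *ᵥ v i) ≤ ∑ i ∈ S, sqNorm (Q *ᵥ v i) + S.card * ∑ i, δ i := by
  have := Finset.sum_le_sum fun i (_ : i ∈ S) => sqNorm_mulVec_le_add_of_gram hG hδ hY (v i)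
  have hunit : ∑ i ∈ S, (∑ j, δ j) * sqNorm (v i) = S.card * ∑ j, δ j := by
    rw [Finset.sum_congr rfl fun i hi => by rw [hv i hi, mul_one], Finset.sum_const, nsmul_eq_mul]
  rwa [Finset.sum_add_distrib, hunit] at this

end Gram

theorem fd_projection_relative_error_general
    (n d ℓ : ℕ) (hℓ : 0 < ℓ)
    (A : Matrix (Fin n) (Fin d) ℝ)
    (Q : Fin (n + 1) → Matrix (Fin ℓ) (Fin d) ℝ)
    (C : Fin n → Matrix (Fin ℓ) (Fin d) ℝ)
    (Z : Fin n → Matrix (Fin ℓ) (Fin ℓ) ℝ)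
    (Y : Fin n → Matrix (Fin d) (Fin ℓ) ℝ)
    (s : Fin n → Fin ℓ → ℝ) (δ : Fin n → ℝ)
    -- the algorithm starts with the zero matrix
    (hQ0 : Q 0 = 0)
    -- `C i` is `Q^{i-1}` with its last row replaced by the `i`-th row of `A`
    (hC : ∀ i : Fin n,
      C i = (Q i.castSucc).updateRow ⟨ℓ - 1, Nat.sub_lt hℓ Nat.one_pos⟩ (A i))
    -- a singular value decomposition `C i = Z S Yᵀ` of `C i`
    (hZ : ∀ i, (Z i)ᵀ * Z i = 1)
    (hY : ∀ i, (Y i)ᵀ * Y i = 1)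
    (hSVD : ∀ i, C i = Z i * Matrix.diagonal (s i) * (Y i)ᵀ)
    (hmono : ∀ i, ∀ j j' : Fin ℓ, j ≤ j' → s i j' ≤ s i j)
    (hnn : ∀ i j, 0 ≤ s i j)
    -- `δ i` is the square of the smallest singular value of `C i`
    (hδ : ∀ i, δ i = s i ⟨ℓ - 1, Nat.sub_lt hℓ Nat.one_pos⟩ ^ 2)
    -- the shrinking step producing `Q^i = S' Yᵀ`
    (hQs : ∀ i : Fin n,
      Q i.succ = Matrix.diagonal (fun j => Real.sqrt (s i j ^ 2 - δ i)) * (Y i)ᵀ)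
    -- `v` is an orthonormal family of right singular vectors of `A`,
    -- ordered by decreasing singular values `σA`
    (v : Fin d → Fin d → ℝ)
    (hv : ∀ a b : Fin d, ∑ t, v a t * v b t = if a = b then 1 else 0)
    -- `y` is an orthonormal family of right singular vectors of the output
    -- matrix `Q = Qⁿ`, ordered by decreasing singular values `τ`
    (y : Fin d → Fin d → ℝ) (τ : Fin d → ℝ)
    (hy : ∀ a b : Fin d, ∑ t, y a t * y b t = if a = b then 1 else 0)
    (hτmono : ∀ a b : Fin d, a ≤ b → τ b ≤ τ a)
    (hτnn : ∀ a, 0 ≤ τ a)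
    (hQy : ∀ a, ((Q (Fin.last n))ᵀ * Q (Fin.last n)).mulVec (y a) = τ a ^ 2 • y a)
    (ε : ℝ) (hε0 : 0 < ε) (k : ℕ)
    (hℓdef : ℓ = ⌈(k : ℝ) + (k : ℝ) / ε⌉₊)
 :
    frobSq (A - (Matrix.of fun rr t =>
      ∑ i ∈ Finset.univ.filter (fun i : Fin d => (i : ℕ) < k),
        (∑ t', A rr t' * y i t') * y i t)) ≤
      (1 + ε) * (frobSq A - ∑ i ∈ Finset.univ.filter (fun i : Fin d => (i : ℕ) < k), sqNorm (A.mulVec (v i))) := by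
  set S := Finset.univ.filter (fun i : Fin d => (i : ℕ) < k)
  set Qn := Q (Fin.last n)
  set Δ := ∑ i, δ i
  have hδ0 : ∀ i, 0 ≤ δ i := fun i => hδ i ▸ sq_nonneg _
  have hmin : ∀ i j, δ i ≤ s i j ^ 2 := fun i j => hδ i ▸
    pow_le_pow_left₀ (hnn i _) (hmono i j _ (Fin.le_def.mpr (Nat.le_sub_one_of_lt j.isLt))) 2
  have hG := gram_frequentDirections _ A hQ0 hC hZ hSVD hmin hδ hQs
  have hτ : ∀ a, sqNorm (Qn *ᵥ y a) = τ a ^ 2 := fun a => by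
    rw [sqNorm_mulVec, hQy, dotProduct_smul, smul_eq_mul,
      show y a ⬝ᵥ y a = 1 from (hy a a).trans (if_pos rfl), mul_one]
  have hAy : ∑ i ∈ S, τ i ^ 2 ≤ ∑ i ∈ S, sqNorm (A *ᵥ y i) :=
    Finset.sum_le_sum fun i _ => hτ i ▸ sqNorm_mulVec_le_of_gram hG hδ0 _
  have hkyFan : ∑ i ∈ S, sqNorm (Qn *ᵥ v i) ≤ ∑ i ∈ S, τ i ^ 2 := by
    simpa only [sqNorm_mulVec] using sum_dotProduct_mulVec_le_sum_eigenvalues hy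
      (fun a b hab => pow_le_pow_left₀ (hτnn b) (hτmono a b hab) 2) (fun a => sq_nonneg _) hQy hv k
  have hAv := sum_sqNorm_mulVec_le_add_of_gram S
    (fun i _ => (sqNorm_eq_dotProduct _).trans ((hv i i).trans (if_pos rfl))) hG hδ0 hY
  have hΔ : ((ℓ : ℝ) - S.card) * Δ ≤ frobSq A - ∑ i ∈ S, sqNorm (A *ᵥ v i) := by
    linarith [frobSq_of_gram hG hY, sum_sqNorm_mulVec_le_frobSq S (fun a _ b _ => hv a b) Qn]
  have hS : (S.card : ℝ) ≤ (ℓ - S.card) * ε := by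
    have hcard : (S.card : ℝ) ≤ k := by
      exact_mod_cast Fin.card_filter_val_lt.trans_le (min_le_right d k)
    have : (k : ℝ) / ε ≤ ℓ - S.card := by linarith [hℓdef ▸ Nat.le_ceil ((k : ℝ) + k / ε)]
    rw [div_le_iff₀ hε0] at this
    linarith
  calc _ = frobSq A - ∑ i ∈ S, sqNorm (A *ᵥ y i) := frobSq_sub_proj S (fun a _ b _ => hy a b) A
    _ ≤ (1 + ε) * (frobSq A - ∑ i ∈ S, sqNorm (A *ᵥ v i)) := by
      linarith [mul_le_mul_of_nonneg_right hS (Finset.sum_nonneg fun i _ => hδ0 i : 0 ≤ Δ),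
        mul_le_mul_of_nonneg_left hΔ hε0.le]

/-- Let `ε ∈ (0,1]`, let `k ≥ 1` be an integer, and let `Q` be the output of
the Frequent Directions algorithm run on an `n × d` matrix `A` with parameter
`ℓ = ⌈k + k/ε⌉`.  Then `‖A - π_{Q_k}(A)‖_F² ≤ (1 + ε) ‖A - A_k‖_F²`, where
`π_{Q_k}(A)` projects each row of `A` onto the span of the top `k` right
singular vectors `y_1, …, y_k` of `Q`, and
`‖A - A_k‖_F² = ‖A‖_F² - ∑_{i=1}^k ‖A v_i‖²` for right singular vectors
`v_1, …, v_d` of `A` ordered by decreasing singular values. -/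
theorem fd_projection_relative_error
    (n d ℓ : ℕ) (hℓ : 0 < ℓ)
    (A : Matrix (Fin n) (Fin d) ℝ)
    (Q : Fin (n + 1) → Matrix (Fin ℓ) (Fin d) ℝ)
    (C : Fin n → Matrix (Fin ℓ) (Fin d) ℝ)
    (Z : Fin n → Matrix (Fin ℓ) (Fin ℓ) ℝ)
    (Y : Fin n → Matrix (Fin d) (Fin ℓ) ℝ)
    (s : Fin n → Fin ℓ → ℝ) (δ : Fin n → ℝ)
    -- the algorithm starts with the zero matrix
    (hQ0 : Q 0 = 0)
    -- `C i` is `Q^{i-1}` with its last row replaced by the `i`-th row of `A`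
    (hC : ∀ i : Fin n,
      C i = (Q i.castSucc).updateRow ⟨ℓ - 1, Nat.sub_lt hℓ Nat.one_pos⟩ (A i))
    -- a singular value decomposition `C i = Z S Yᵀ` of `C i`
    (hZ : ∀ i, (Z i)ᵀ * Z i = 1)
    (hY : ∀ i, (Y i)ᵀ * Y i = 1)
    (hSVD : ∀ i, C i = Z i * Matrix.diagonal (s i) * (Y i)ᵀ)
    (hmono : ∀ i, ∀ j j' : Fin ℓ, j ≤ j' → s i j' ≤ s i j)
    (hnn : ∀ i j, 0 ≤ s i j)
    -- `δ i` is the square of the smallest singular value of `C i`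
    (hδ : ∀ i, δ i = s i ⟨ℓ - 1, Nat.sub_lt hℓ Nat.one_pos⟩ ^ 2)
    -- the shrinking step producing `Q^i = S' Yᵀ`
    (hQs : ∀ i : Fin n,
      Q i.succ = Matrix.diagonal (fun j => Real.sqrt (s i j ^ 2 - δ i)) * (Y i)ᵀ)
    -- `v` is an orthonormal family of right singular vectors of `A`,
    -- ordered by decreasing singular values `σA`
    (v : Fin d → Fin d → ℝ) (σA : Fin d → ℝ)
    (hv : ∀ a b : Fin d, ∑ t, v a t * v b t = if a = b then 1 else 0)
    (hσmono : ∀ a b : Fin d, a ≤ b → σA b ≤ σA a)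
    (hσnn : ∀ a, 0 ≤ σA a)
    (hAv : ∀ a, (Aᵀ * A).mulVec (v a) = σA a ^ 2 • v a)
    -- `y` is an orthonormal family of right singular vectors of the output
    -- matrix `Q = Qⁿ`, ordered by decreasing singular values `τ`
    (y : Fin d → Fin d → ℝ) (τ : Fin d → ℝ)
    (hy : ∀ a b : Fin d, ∑ t, y a t * y b t = if a = b then 1 else 0)
    (hτmono : ∀ a b : Fin d, a ≤ b → τ b ≤ τ a)
    (hτnn : ∀ a, 0 ≤ τ a)
    (hQy : ∀ a, ((Q (Fin.last n))ᵀ * Q (Fin.last n)).mulVec (y a) = τ a ^ 2 • y a)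
    (ε : ℝ) (hε0 : 0 < ε) (hε1 : ε ≤ 1) (k : ℕ) (hk : 1 ≤ k)
    (hℓdef : ℓ = ⌈(k : ℝ) + (k : ℝ) / ε⌉₊)
 :
    frobSq (A - (Matrix.of fun rr t =>
      ∑ i ∈ Finset.univ.filter (fun i : Fin d => (i : ℕ) < k),
        (∑ t', A rr t' * y i t') * y i t)) ≤
      (1 + ε) * (frobSq A - ∑ i ∈ Finset.univ.filter (fun i : Fin d => (i : ℕ) < k), sqNorm (A.mulVec (v i))) :=
  fd_projection_relative_error_general n d ℓ hℓ A Q C Z Y s δ hQ0 hC hZ hY hSVD hmono hnn hδ hQs v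
    hv y τ hy hτmono hτnn hQy ε hε0 k hℓdef
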